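/- arXiv:1005.2831 — 4 statements merged into one kernel-verified Lean document; each statement's English description precedes it below -/
import Mathlib

section
/- Let C be a category and let D be a symmetric 2-group. Equip the functor category C ⥤ D with the pointwise monoidal structure ((F ⊗ G)(X) = F(X) ⊗ G(X), unit the constant functor at 𝟙_D). Then every object of C ⥤ D is invertible: for every functor F : C ⥤ D there exist a functor F* : C ⥤ D (with F*(X) = (F X)* on objects) and a natural isomorphism F* ⊗ F ≅ 𝟙, where 𝟙 denotes the constant functor at the monoidal unit of D. -/
open CategoryTheory MonoidalCategory

universe v₁ v₂ u₁ u₂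

/-!
Because `B ⊗ A ≅ 𝟙` and, via the braiding, `A ⊗ B ≅ 𝟙`, tensoring on the right with `A` is an
autoequivalence of `D`. Hence for an isomorphism `g : A ⟶ A'` there is a unique
`u : A* ⟶ A'*` with `(u ⊗ g) ≫ η_A' = η_A`. Uniqueness makes `g ↦ u` functorial, which gives
`F*`, and the defining equation of `u` is precisely the naturality of `X ↦ η_(F X)`.
-/

section Dual

variable {D : Type u₂} [Category.{v₂} D] [MonoidalCategory D] [BraidedCategory D]

noncomputable def tensorRightEquivOfIsoUnit {A B : D} (e : B ⊗ A ≅ 𝟙_ D) : D ≌ D :=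
  CategoryTheory.Equivalence.mk (tensorRight A) (tensorRight B)
    ((rightUnitorNatIso D).symm ≪≫ (tensoringRight D).mapIso (β_ A B ≪≫ e).symm ≪≫
      tensorRightTensor A B)
    ((tensorRightTensor B A).symm ≪≫ (tensoringRight D).mapIso e ≪≫ rightUnitorNatIso D)

noncomputable def tensorRightFullyFaithfulOfIsoUnit {A B : D} (e : B ⊗ A ≅ 𝟙_ D) :
    (tensorRight A).FullyFaithful :=
  (tensorRightEquivOfIsoUnit e).fullyFaithfulFunctor

variable (star : D → D) (η : ∀ X : D, star X ⊗ X ≅ 𝟙_ D)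

noncomputable def dualMap {A A' : D} (g : A ⟶ A') [IsIso g] : star A ⟶ star A' :=
  (tensorRightFullyFaithfulOfIsoUnit (η A)).preimage
    ((η A).hom ≫ (η A').inv ≫ star A' ◁ inv g)

variable {star η}

lemma tensorHom_comp_eq_iff_eq_dualMap {A A' : D} (g : A ⟶ A') [IsIso g]
    (u : star A ⟶ star A') :
    (u ⊗ₘ g) ≫ (η A').hom = (η A).hom ↔ u = dualMap star η g := by
  rw [dualMap, ← Functor.FullyFaithful.homEquiv_symm_apply, Equiv.eq_symm_apply,
    Functor.FullyFaithful.homEquiv_apply, MonoidalCategory.tensorHom_def, ← Iso.eq_comp_inv,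
    ← IsIso.eq_comp_inv, inv_whiskerLeft, Category.assoc]
  rfl

lemma dualMap_tensorHom_comp {A A' : D} (g : A ⟶ A') [IsIso g] :
    (dualMap star η g ⊗ₘ g) ≫ (η A').hom = (η A).hom :=
  (tensorHom_comp_eq_iff_eq_dualMap g _).2 rfl

@[simp]
lemma dualMap_id (A : D) : dualMap star η (𝟙 A) = 𝟙 (star A) :=
  ((tensorHom_comp_eq_iff_eq_dualMap _ _).1 (by simp)).symm

lemma dualMap_comp {A A' A'' : D} (g : A ⟶ A') (h : A' ⟶ A'') [IsIso g] [IsIso h] :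
    dualMap star η (g ≫ h) = dualMap star η g ≫ dualMap star η h :=
  ((tensorHom_comp_eq_iff_eq_dualMap _ _).1 (by
    rw [← tensorHom_comp_tensorHom, Category.assoc, dualMap_tensorHom_comp,
      dualMap_tensorHom_comp])).symm

end Dual

section FunctorCategory

variable {C : Type u₁} [Category.{v₁} C] {D : Type u₂} [Groupoid.{v₂} D] [MonoidalCategory D]
  [BraidedCategory D] (star : D → D) (η : ∀ X : D, star X ⊗ X ≅ 𝟙_ D)

@[simps]
noncomputable def dualFunctor (F : C ⥤ D) : C ⥤ D where
  obj X := star (F.obj X)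
  map f := dualMap star η (F.map f)
  map_id X := by simp
  map_comp f g := by simp [dualMap_comp]

noncomputable def dualFunctorTensorIso (F : C ⥤ D) : dualFunctor star η F ⊗ F ≅ 𝟙_ (C ⥤ D) :=
  NatIso.ofComponents (fun X => η (F.obj X)) fun f => by
    simp only [Monoidal.tensorObj_map, Monoidal.tensorUnit_map, dualFunctor_map]
    exact (dualMap_tensorHom_comp (η := η) (F.map f)).trans (Category.comp_id _).symm

end FunctorCategory

/-- Let `C` be a category and `D` a symmetric 2-group, i.e. a symmetric
monoidal groupoid in which every object is invertible (witnessed here by the data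
`star : D → D` and `η : ∀ X, star X ⊗ X ≅ 𝟙_ D`).  Equip the functor category `C ⥤ D` with the
pointwise monoidal structure.  Then every object of `C ⥤ D` is invertible: for every functor
`F : C ⥤ D` there is a functor `F*` with `F*(X) = (F X)*` on objects, together with a natural
isomorphism `F* ⊗ F ≅ 𝟙`, where `𝟙` is the constant functor at the unit of `D`. -/
theorem functorCategory_objects_invertible
    {C : Type u₁} [Category.{v₁} C]
    {D : Type u₂} [Groupoid.{v₂} D] [MonoidalCategory D] [SymmetricCategory D]
    (star : D → D) (η : ∀ X : D, star X ⊗ X ≅ 𝟙_ D) (F : C ⥤ D) :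
    ∃ Fs : C ⥤ D, (∀ X : C, Fs.obj X = star (F.obj X)) ∧
      Nonempty ((Fs ⊗ F : C ⥤ D) ≅ 𝟙_ (C ⥤ D)) :=
  ⟨dualFunctor star η F, fun _ => rfl, ⟨dualFunctorTensorIso star η F⟩⟩
end

section
/- Let A and B be symmetric 2-groups, F : A ⥤ B a homomorphism of symmetric 2-groups, and Ker F the category of pairs (A, a : F(A) ⟶ 𝟙_B) with morphisms f satisfying a′ ∘ F(f) = a, with forgetful functor e_F : Ker F ⥤ A. Let ε_F : e_F ⋙ F ⟹ 0 be the natural transformation to the constant functor at 𝟙_B whose component at (A, a) is a. Then (Ker F, e_F, ε_F) has the universal property of the kernel: for every category K, every functor G : K ⥤ A, and every natural transformation φ : G ⋙ F ⟹ 0, the assignment G′(k) = (G(k), φ_k) defines a functor G′ : K ⥤ Ker F together with a natural isomorphism φ′ : G′ ⋙ e_F ≅ G whose component at each k is the identity, compatible with φ and ε_F in the sense that φ_k ∘ F(φ′_k) = (ε_F)_{G′(k)} for all k; moreover, if (G″, φ″) is another such pair satisfying the same compatibility, then there is a unique natural transformation ψ : G″ ⟹ G′ with φ′_k ∘ e_F(ψ_k)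 = φ″_k for all k. -/
open CategoryTheory MonoidalCategory Functor.LaxMonoidal Functor.OplaxMonoidal

universe v₁ v₂ v₃ u₁ u₂ u₃

variable {A : Type u₁} [Groupoid.{v₁} A] [MonoidalCategory A] [SymmetricCategory A]
variable {B : Type u₂} [Groupoid.{v₂} B] [MonoidalCategory B] [SymmetricCategory B]

/-- Objects of the kernel `Ker F`: pairs `(A, a : F(A) ⟶ 𝟙_ B)`. -/
structure KerObj (F : A ⥤ B) [F.Braided] where
  pt : A
  ar : F.obj pt ⟶ 𝟙_ B

variable (F : A ⥤ B) [F.Braided]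

/-- Morphisms `(A, a) ⟶ (A', a')` in `Ker F` are morphisms `f : A ⟶ A'` with `a' ∘ F(f) = a`. -/
instance : Category (KerObj F) where
  Hom X Y := { f : X.pt ⟶ Y.pt // F.map f ≫ Y.ar = X.ar }
  id X := ⟨𝟙 X.pt, by simp⟩
  comp {X Y Z} f g := ⟨f.1 ≫ g.1, by rw [F.map_comp, Category.assoc, g.2, f.2]⟩
  id_comp f := Subtype.ext (by simp)
  comp_id f := Subtype.ext (by simp)
  assoc f g h := Subtype.ext (by simp)

/-- The forgetful functor `e_F : Ker F ⥤ A`. -/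
def eF : KerObj F ⥤ A where
  obj X := X.pt
  map f := f.1

/-- The 2-morphism `ε_F : e_F ⋙ F ⟹ 0`, whose component at `(A, a)` is `a`; here `0` is the
constant functor at `𝟙_ B`. -/
def epsF : eF F ⋙ F ⟶ (Functor.const (KerObj F)).obj (𝟙_ B) where
  app X := X.ar
  naturality X Y f := by exact f.2.trans (Category.comp_id X.ar).symm

/-- The canonical comparison functor into the kernel: given `G : K ⥤ A` and
`φ : G ⋙ F ⟹ 0`, set `G'(k) = (G(k), φ_k)`. -/
def liftToKer (K : Type u₃) [Category.{v₃} K] (G : K ⥤ A)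
    (φ : G ⋙ F ⟶ (Functor.const K).obj (𝟙_ B)) : K ⥤ KerObj F where
  obj k := ⟨G.obj k, φ.app k⟩
  map {k k'} f := ⟨G.map f, by simpa using φ.naturality f⟩
  map_id k := Subtype.ext (by simp; rfl)
  map_comp f g := Subtype.ext (by simp; rfl)

/-! A morphism in `Ker F` is a morphism of `A` together with a proof of the compatibility with
the arrows to `𝟙_ B`, so factorisations through `Ker F` exist by construction, and they are unique
because the forgetful functor `e_F` is faithful. -/

section KernelUniversalProperty

variable {F}

lemma KerObj.hom_ext {X Y : KerObj F} {f g : X ⟶ Y} (h : f.1 = g.1) : f = g :=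
  Subtype.ext h

instance eF_faithful : (eF F).Faithful :=
  ⟨KerObj.hom_ext⟩

variable {K : Type u₃} [Category.{v₃} K] {G : K ⥤ A}
  {φ : G ⋙ F ⟶ (Functor.const K).obj (𝟙_ B)}

variable (F K G φ) in
def liftToKerCompEFIso : liftToKer F K G φ ⋙ eF F ≅ G :=
  Iso.refl G

@[simp]
lemma liftToKerCompEFIso_hom_app (k : K) :
    (liftToKerCompEFIso F K G φ).hom.app k = 𝟙 (G.obj k) :=
  rfl

lemma map_liftToKerCompEFIso_hom_app_comp (k : K) :
    F.map ((liftToKerCompEFIso F K G φ).hom.app k) ≫ φ.app k =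
      (epsF F).app ((liftToKer F K G φ).obj k) :=
  (congrArg (· ≫ φ.app k) (F.map_id (G.obj k))).trans (Category.id_comp _)

def toLiftToKer {G'' : K ⥤ KerObj F} (α : G'' ⋙ eF F ⟶ G)
    (hα : ∀ k, F.map (α.app k) ≫ φ.app k = (epsF F).app (G''.obj k)) :
    G'' ⟶ liftToKer F K G φ where
  app k := ⟨α.app k, hα k⟩
  naturality _ _ f := KerObj.hom_ext (α.naturality f)

lemma toLiftToKer_unique {G'' : K ⥤ KerObj F} (α : G'' ⋙ eF F ⟶ G)
    (hα : ∀ k, F.map (α.app k) ≫ φ.app k = (epsF F).app (G''.obj k))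
    (ψ : G'' ⟶ liftToKer F K G φ) (hψ : ∀ k, (eF F).map (ψ.app k) = α.app k) :
    ψ = toLiftToKer α hα :=
  NatTrans.ext (funext fun k => (eF F).map_injective (hψ k))

end KernelUniversalProperty

theorem kernel_universal_property
    (K : Type u₃) [Category.{v₃} K] (G : K ⥤ A)
    (φ : G ⋙ F ⟶ (Functor.const K).obj (𝟙_ B)) :
    (∀ k : K, (liftToKer F K G φ).obj k = ⟨G.obj k, φ.app k⟩) ∧
    ∃ φ' : liftToKer F K G φ ⋙ eF F ≅ G,
      (∀ k : K, φ'.hom.app k = 𝟙 (G.obj k)) ∧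
      (∀ k : K, F.map (φ'.hom.app k) ≫ φ.app k = (epsF F).app ((liftToKer F K G φ).obj k)) ∧
      (∀ (G'' : K ⥤ KerObj F) (φ'' : G'' ⋙ eF F ≅ G),
        (∀ k : K, F.map (φ''.hom.app k) ≫ φ.app k = (epsF F).app (G''.obj k)) →
        ∃! ψ : G'' ⟶ liftToKer F K G φ,
          ∀ k : K, (eF F).map (ψ.app k) ≫ φ'.hom.app k = φ''.hom.app k) := by
  refine ⟨fun _ => rfl, liftToKerCompEFIso F K G φ, liftToKerCompEFIso_hom_app,
    map_liftToKerCompEFIso_hom_app_comp,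
    fun G'' φ'' hφ'' => ⟨toLiftToKer φ''.hom hφ'', fun _ => Category.comp_id _, ?_⟩⟩
  intro ψ hψ
  exact toLiftToKer_unique φ''.hom hφ'' ψ fun k => (Category.comp_id _).symm.trans (hψ k)
end

section
/- Let A and B be symmetric 2-groups and F : A ⥤ B a homomorphism of symmetric 2-groups. On the type of objects of B, define B₁ ∼ B₂ iff there exist an object A of A and a morphism B₁ ⟶ F(A) ⊗ B₂ in B. Then ∼ is an equivalence relation which is compatible with the tensor product of B (if B₁ ∼ B₁′ and B₂ ∼ B₂′ then B₁ ⊗ B₂ ∼ B₁′ ⊗ B₂′), and the quotient of the objects of B by ∼ is a commutative group under the operation induced by ⊗, with identity the class of 𝟙_B and with the inverse of the class of B given by the class of B*. (This group is the morphism group of the one-object groupoid Copip F.) -/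
/-!
A morphism `B₁ ⟶ F(A₀) ⊗ B₂` can be composed with one out of `B₂` by means of the
monoidal structure `μ` of `F`, reversed using the inverse of `A₀` in `A`, and tensored with
another one using the braiding of `B`; so `copipRel F` is a congruence for `⊗`. Every
isomorphism of `B` relates its source and target (take `A₀ = 𝟙`), so associators, unitors and
braidings make the quotient a commutative monoid, in which `[B*]` is inverse to `[B]` via `η`.
Uniqueness of inverses in a monoid makes `[B] ↦ [B*]` well defined.
-/

open CategoryTheory MonoidalCategory

universe v₁ v₂ u₁ u₂

/-- The relation on objects of `B`: `B₁ ∼ B₂` iff there are an object `A₀` of `A` and a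
morphism `B₁ ⟶ F(A₀) ⊗ B₂` in `B`.  (Its quotient is the morphism set of the one-object
groupoid `Copip F`.) -/
def copipRel {A : Type u₁} [Groupoid.{v₁} A] [MonoidalCategory A] [SymmetricCategory A]
    {B : Type u₂} [Groupoid.{v₂} B] [MonoidalCategory B] [SymmetricCategory B]
    (F : A ⥤ B) : B → B → Prop :=
  fun B₁ B₂ => ∃ A₀ : A, Nonempty (B₁ ⟶ F.obj A₀ ⊗ B₂)

namespace CopipRel

variable {A : Type u₁} [Groupoid.{v₁} A] [MonoidalCategory A] [SymmetricCategory A]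
    {B : Type u₂} [Groupoid.{v₂} B] [MonoidalCategory B] [SymmetricCategory B]
    (F : A ⥤ B) [F.LaxMonoidal]

open Functor.LaxMonoidal

lemma of_hom {X Y : B} (f : X ⟶ Y) : copipRel F X Y :=
  ⟨𝟙_ A, ⟨f ≫ (λ_ Y).inv ≫ ε F ▷ Y⟩⟩

lemma refl (X : B) : copipRel F X X := of_hom F (𝟙 X)

variable {F}

lemma trans {X Y Z : B} (h₁ : copipRel F X Y) (h₂ : copipRel F Y Z) : copipRel F X Z := by
  obtain ⟨A₀, ⟨f⟩⟩ := h₁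
  obtain ⟨A₁, ⟨g⟩⟩ := h₂
  exact ⟨A₀ ⊗ A₁, ⟨f ≫ F.obj A₀ ◁ g ≫ (α_ _ _ _).inv ≫ μ F A₀ A₁ ▷ Z⟩⟩

lemma symm (hA : ∀ X : A, ∃ Y : A, Nonempty (Y ⊗ X ≅ 𝟙_ A)) {X Y : B}
    (h : copipRel F X Y) : copipRel F Y X := by
  obtain ⟨A₀, ⟨f⟩⟩ := h
  obtain ⟨A₁, ⟨e⟩⟩ := hA A₀
  exact ⟨A₁, ⟨(λ_ Y).inv ≫ ε F ▷ Y ≫ F.map e.inv ▷ Y ≫ Groupoid.inv (μ F A₁ A₀) ▷ Y ≫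
    (α_ _ _ _).hom ≫ F.obj A₁ ◁ Groupoid.inv f⟩⟩

lemma tensor {B₁ B₁' B₂ B₂' : B} (h₁ : copipRel F B₁ B₁') (h₂ : copipRel F B₂ B₂') :
    copipRel F (B₁ ⊗ B₂) (B₁' ⊗ B₂') := by
  obtain ⟨A₀, ⟨f⟩⟩ := h₁
  obtain ⟨A₁, ⟨g⟩⟩ := h₂
  exact ⟨A₀ ⊗ A₁, ⟨(f ⊗ₘ g) ≫ (α_ _ _ _).hom ≫
    F.obj A₀ ◁ ((α_ _ _ _).inv ≫ (β_ B₁' (F.obj A₁)).hom ▷ B₂' ≫ (α_ _ _ _).hom) ≫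
    (α_ _ _ _).inv ≫ μ F A₀ A₁ ▷ (B₁' ⊗ B₂')⟩⟩

lemma equivalence (hA : ∀ X : A, ∃ Y : A, Nonempty (Y ⊗ X ≅ 𝟙_ A)) :
    Equivalence (copipRel F) :=
  ⟨refl F, symm hA, trans⟩

end CopipRel

section CopipGroup

variable {A : Type u₁} [Groupoid.{v₁} A] [MonoidalCategory A] [SymmetricCategory A]
    {B : Type u₂} [Groupoid.{v₂} B] [MonoidalCategory B] [SymmetricCategory B]
    (F : A ⥤ B) [F.LaxMonoidal]

abbrev copipCommMonoid : CommMonoid (Quot (copipRel F)) where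
  mul := Quot.map₂ (· ⊗ ·) (fun X _ _ h => CopipRel.tensor (CopipRel.refl F X) h)
    (fun _ _ Y h => CopipRel.tensor h (CopipRel.refl F Y))
  one := Quot.mk _ (𝟙_ B)
  mul_assoc := Quot.ind fun X => Quot.ind fun Y => Quot.ind fun Z =>
    Quot.sound (CopipRel.of_hom F (α_ X Y Z).hom)
  one_mul := Quot.ind fun X => Quot.sound (CopipRel.of_hom F (λ_ X).hom)
  mul_one := Quot.ind fun X => Quot.sound (CopipRel.of_hom F (ρ_ X).hom)
  mul_comm := Quot.ind fun X => Quot.ind fun Y => Quot.sound (CopipRel.of_hom F (β_ X Y).hom)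

lemma copipCommMonoid_mk_mul_mk (X Y : B) :
    (copipCommMonoid F).mul (Quot.mk _ X) (Quot.mk _ Y) = Quot.mk _ (X ⊗ Y) :=
  rfl

variable {F} (star : B → B)

lemma copipCommMonoid_mk_star_mul_mk (η : ∀ X : B, star X ⊗ X ≅ 𝟙_ B) (X : B) :
    (copipCommMonoid F).mul (Quot.mk _ (star X)) (Quot.mk _ X) = (copipCommMonoid F).one :=
  Quot.sound (CopipRel.of_hom F (η X).hom)

lemma mk_star_eq_of_copipRel (η : ∀ X : B, star X ⊗ X ≅ 𝟙_ B) {X Y : B} (h : copipRel F X Y) :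
    Quot.mk (copipRel F) (star X) = Quot.mk (copipRel F) (star Y) := by
  let _ := copipCommMonoid F
  have hXY : Quot.mk (copipRel F) X = Quot.mk (copipRel F) Y := Quot.sound h
  refine left_inv_eq_right_inv (copipCommMonoid_mk_star_mul_mk star η X) ?_
  rw [hXY, mul_comm]
  exact copipCommMonoid_mk_star_mul_mk star η Y

abbrev copipCommGroup (η : ∀ X : B, star X ⊗ X ≅ 𝟙_ B) : CommGroup (Quot (copipRel F)) :=
  { copipCommMonoid F with
    inv := Quot.lift (fun X => Quot.mk _ (star X)) fun _ _ => mk_star_eq_of_copipRel star η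
    inv_mul_cancel := Quot.ind (copipCommMonoid_mk_star_mul_mk star η) }

end CopipGroup

/-- **Statement 9.** Let `A`, `B` be symmetric 2-groups (symmetric monoidal groupoids in which
every object is invertible; for `B` the inverses are given by the data `star`, `η`) and
`F : A ⥤ B` a homomorphism of symmetric 2-groups.  The relation `copipRel F` is an equivalence
relation compatible with the tensor product of `B`, and the quotient of the objects of `B` by
it is a commutative group under the operation induced by `⊗`, with identity the class of
`𝟙_ B` and inverse the class of `B*`. -/
theorem copip_morphisms_commGroup
    {A : Type u₁} [Groupoid.{v₁} A] [MonoidalCategory A] [SymmetricCategory A]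
    {B : Type u₂} [Groupoid.{v₂} B] [MonoidalCategory B] [SymmetricCategory B]
    (hA : ∀ X : A, ∃ Y : A, Nonempty (Y ⊗ X ≅ 𝟙_ A))
    (star : B → B) (η : ∀ X : B, star X ⊗ X ≅ 𝟙_ B)
    (F : A ⥤ B) [F.Braided] :
    Equivalence (copipRel F) ∧
    (∀ B₁ B₁' B₂ B₂' : B, copipRel F B₁ B₁' → copipRel F B₂ B₂' →
      copipRel F (B₁ ⊗ B₂) (B₁' ⊗ B₂')) ∧
    ∃ G : CommGroup (Quot (copipRel F)),
      (∀ B₁ B₂ : B,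
        G.mul (Quot.mk (copipRel F) B₁) (Quot.mk (copipRel F) B₂) =
          Quot.mk (copipRel F) (B₁ ⊗ B₂)) ∧
      (G.one = Quot.mk (copipRel F) (𝟙_ B)) ∧
      (∀ X : B, G.inv (Quot.mk (copipRel F) X) = Quot.mk (copipRel F) (star X)) :=
  ⟨CopipRel.equivalence hA, fun _ _ _ _ => CopipRel.tensor,
    copipCommGroup star η, copipCommMonoid_mk_mul_mk F, rfl, fun _ => rfl⟩
end

section
/- Let A, B, and K be symmetric 2-groups and F₁ : A ⥤ K, F₂ : B ⥤ K homomorphisms of symmetric 2-groups. Equip the product category A × B with the componentwise symmetric monoidal structure (so A × B is again a symmetric 2-group), and let i₁ : A ⥤ A × B, A ↦ (A, 𝟙_B), and i₂ : B ⥤ A × B, B ↦ (𝟙_A, B), be the canonical inclusions. Then the functor G : A × B ⥤ K defined by G(A, B) = F₁(A) ⊗ F₂(B) admits a monoidal structure compatible with the symmetries, built from the tensorators of F₁ and F₂ and the middle-four interchange isomorphism of K, and there are natural isomorphisms l₁ : i₁ ⋙ G ≅ F₁ and l₂ : i₂ ⋙ G ≅ F₂ whose components are F₁(A) ⊗ F₂(𝟙_B)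 → F₁(A) ⊗ 𝟙_K → F₁(A) and F₁(𝟙_A) ⊗ F₂(B) → 𝟙_K ⊗ F₂(B) → F₂(B), respectively. -/
open CategoryTheory MonoidalCategory Functor.LaxMonoidal Functor.OplaxMonoidal

universe v₁ v₂ v₃ u₁ u₂ u₃

variable {A : Type u₁} [Groupoid.{v₁} A] [MonoidalCategory A] [SymmetricCategory A]
variable {B : Type u₂} [Groupoid.{v₂} B] [MonoidalCategory B] [SymmetricCategory B]
variable {K : Type u₃} [Groupoid.{v₃} K] [MonoidalCategory K] [SymmetricCategory K]

/-- The functor `G : A × B ⥤ K`, `(A, B) ↦ F₁(A) ⊗ F₂(B)`. -/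
def biprodComparison (F₁ : A ⥤ K) (F₂ : B ⥤ K) : A × B ⥤ K where
  obj p := F₁.obj p.1 ⊗ F₂.obj p.2
  map f := F₁.map f.1 ⊗ₘ F₂.map f.2
  map_id p := by simp
  map_comp f g := by simp [MonoidalCategory.tensorHom_comp_tensorHom]

/-!
`(X, Y) ↦ F₁ X ⊗ F₂ Y` is the composite `F₁.prod F₂ ⋙ tensor K` of lax monoidal functors, which
gives the monoidal structure. Since `F₁` and `F₂` are braided, its compatibility with the
braidings reduces to the middle-four interchange commuting with the braidings, which holds
because `K` is symmetric.
-/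

namespace CategoryTheory

section
variable {C D E : Type*} [Category* C] [Category* D] [Category* E]
  [MonoidalCategory C] [MonoidalCategory D] [MonoidalCategory E]

theorem tensorμ_comp_braiding_tensorHom_braiding [SymmetricCategory E] (a b c d : E) :
    tensorμ a b c d ≫ ((β_ a c).hom ⊗ₘ (β_ b d).hom) =
      (β_ (a ⊗ b) (c ⊗ d)).hom ≫ tensorμ c d a b := by
  dsimp only [tensorμ]
  simp only [MonoidalCategory.tensorHom_def, BraidedCategory.braiding_tensor_left_hom,
    BraidedCategory.braiding_tensor_right_hom]
  calc
    _ = 𝟙 _ ⊗≫ a ◁ (β_ b c).hom ▷ d ⊗≫ (β_ a c).hom ▷ b ▷ d ⊗≫ c ◁ a ◁ (β_ b d).hom ⊗≫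
        c ◁ ((β_ a d).hom ≫ (β_ d a).hom) ▷ b ⊗≫ 𝟙 _ := by
      rw [SymmetricCategory.symmetry]; monoidal
    _ = _ := by monoidal

theorem μ_prod_comp_tensor_comp_map_braiding [BraidedCategory C] [BraidedCategory D]
    [SymmetricCategory E] (F : C ⥤ E) (G : D ⥤ E) [F.LaxBraided] [G.LaxBraided] (X Y : C × D) :
    μ (F.prod G ⋙ tensor E) X Y ≫
        (F.prod G ⋙ tensor E).map ((β_ X.1 Y.1).hom, (β_ X.2 Y.2).hom) =
      (β_ ((F.prod G ⋙ tensor E).obj X) ((F.prod G ⋙ tensor E).obj Y)).hom ≫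
        μ (F.prod G ⋙ tensor E) Y X := by
  change (tensorμ _ _ _ _ ≫ (μ F X.1 Y.1 ⊗ₘ μ G X.2 Y.2)) ≫
      (F.map (β_ X.1 Y.1).hom ⊗ₘ G.map (β_ X.2 Y.2).hom) =
    (β_ _ _).hom ≫ tensorμ _ _ _ _ ≫ (μ F Y.1 X.1 ⊗ₘ μ G Y.2 X.2)
  rw [Category.assoc, tensorHom_comp_tensorHom, Functor.LaxBraided.braided,
    Functor.LaxBraided.braided, ← tensorHom_comp_tensorHom, ← Category.assoc,
    tensorμ_comp_braiding_tensorHom_braiding, Category.assoc]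

variable [BraidedCategory E]

@[simps! hom_app]
def sectLCompProdTensorIso (F : C ⥤ E) (G : D ⥤ E) [G.Monoidal] :
    Prod.sectL C (𝟙_ D) ⋙ F.prod G ⋙ tensor E ≅ F :=
  NatIso.ofComponents
    (fun X => whiskerLeftIso (F.obj X) (Functor.Monoidal.εIso G).symm ≪≫ ρ_ (F.obj X))
    fun {X Y} f => by
      change (F.map f ⊗ₘ G.map (𝟙 (𝟙_ D))) ≫ F.obj Y ◁ η G ≫ (ρ_ _).hom =
        (F.obj X ◁ η G ≫ (ρ_ _).hom) ≫ F.map f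
      rw [G.map_id, tensorHom_id, ← whisker_exchange_assoc, rightUnitor_naturality,
        Category.assoc]

@[simps! hom_app]
def sectRCompProdTensorIso (F : C ⥤ E) (G : D ⥤ E) [F.Monoidal] :
    Prod.sectR (𝟙_ C) D ⋙ F.prod G ⋙ tensor E ≅ G :=
  NatIso.ofComponents
    (fun X => whiskerRightIso (Functor.Monoidal.εIso F).symm (G.obj X) ≪≫ λ_ (G.obj X))
    fun {X Y} f => by
      change (F.map (𝟙 (𝟙_ C)) ⊗ₘ G.map f) ≫ η F ▷ G.obj Y ≫ (λ_ _).hom =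
        (η F ▷ G.obj X ≫ (λ_ _).hom) ≫ G.map f
      rw [F.map_id, id_tensorHom, whisker_exchange_assoc, leftUnitor_naturality,
        Category.assoc]

end

end CategoryTheory

theorem biproduct_comparison_monoidal_general
    (F₁ : A ⥤ K) [F₁.Braided] (F₂ : B ⥤ K) [F₂.Braided] :
    (∃ h : (biprodComparison F₁ F₂).LaxMonoidal,
      (Functor.LaxMonoidal.ε (biprodComparison F₁ F₂) (self := h) = (λ_ (𝟙_ K)).inv ≫ (ε F₁ ⊗ₘ ε F₂)) ∧
      (∀ X Y : A × B, Functor.LaxMonoidal.μ (biprodComparison F₁ F₂) (self := h) X Y =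
        tensorμ (F₁.obj X.1) (F₂.obj X.2) (F₁.obj Y.1) (F₂.obj Y.2) ≫
          (μ F₁ X.1 Y.1 ⊗ₘ μ F₂ X.2 Y.2)) ∧
      (∀ X Y : A × B,
        Functor.LaxMonoidal.μ (biprodComparison F₁ F₂) (self := h) X Y ≫
            (biprodComparison F₁ F₂).map ((β_ X.1 Y.1).hom, (β_ X.2 Y.2).hom) =
          (β_ ((biprodComparison F₁ F₂).obj X) ((biprodComparison F₁ F₂).obj Y)).hom ≫
            Functor.LaxMonoidal.μ (biprodComparison F₁ F₂) (self := h) Y X)) ∧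
    (∃ l₁ : Prod.sectL A (𝟙_ B) ⋙ biprodComparison F₁ F₂ ≅ F₁,
      ∀ X : A, l₁.hom.app X = (𝟙 (F₁.obj X) ⊗ₘ η F₂) ≫ (ρ_ (F₁.obj X)).hom) ∧
    (∃ l₂ : Prod.sectR (𝟙_ A) B ⋙ biprodComparison F₁ F₂ ≅ F₂,
      ∀ X : B, l₂.hom.app X = (η F₁ ⊗ₘ 𝟙 (F₂.obj X)) ≫ (λ_ (F₂.obj X)).hom) :=
  ⟨⟨inferInstanceAs (F₁.prod F₂ ⋙ tensor K).LaxMonoidal, rfl, fun _ _ => rfl,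
      μ_prod_comp_tensor_comp_map_braiding F₁ F₂⟩,
    ⟨sectLCompProdTensorIso F₁ F₂, fun X => by rw [sectLCompProdTensorIso_hom_app, id_tensorHom]⟩,
    ⟨sectRCompProdTensorIso F₁ F₂, fun X => by rw [sectRCompProdTensorIso_hom_app, tensorHom_id]⟩⟩

/-- **Statement 16.** Let `A`, `B`, `K` be symmetric 2-groups and `F₁ : A ⥤ K`, `F₂ : B ⥤ K`
homomorphisms of symmetric 2-groups.  Equip `A × B` with the componentwise monoidal
structure, and let `i₁ : A ⥤ A × B`, `i₂ : B ⥤ A × B` be the canonical inclusions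
`A ↦ (A, 𝟙_B)`, `B ↦ (𝟙_A, B)`.  Then the functor `G(A, B) = F₁(A) ⊗ F₂(B)` admits a lax
monoidal structure, built from the tensorators of `F₁` and `F₂` and the middle-four
interchange of `K`, which is compatible with the symmetries, and there are natural
isomorphisms `l₁ : i₁ ⋙ G ≅ F₁` and `l₂ : i₂ ⋙ G ≅ F₂` with the indicated components. -/
theorem biproduct_comparison_monoidal
    (hA : ∀ X : A, ∃ Y : A, Nonempty (Y ⊗ X ≅ 𝟙_ A))
    (hB : ∀ X : B, ∃ Y : B, Nonempty (Y ⊗ X ≅ 𝟙_ B))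
    (hK : ∀ X : K, ∃ Y : K, Nonempty (Y ⊗ X ≅ 𝟙_ K))
    (F₁ : A ⥤ K) [F₁.Braided] (F₂ : B ⥤ K) [F₂.Braided] :
    (∃ h : (biprodComparison F₁ F₂).LaxMonoidal,
      (Functor.LaxMonoidal.ε (biprodComparison F₁ F₂) (self := h) = (λ_ (𝟙_ K)).inv ≫ (ε F₁ ⊗ₘ ε F₂)) ∧
      (∀ X Y : A × B, Functor.LaxMonoidal.μ (biprodComparison F₁ F₂) (self := h) X Y =
        tensorμ (F₁.obj X.1) (F₂.obj X.2) (F₁.obj Y.1) (F₂.obj Y.2) ≫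
          (μ F₁ X.1 Y.1 ⊗ₘ μ F₂ X.2 Y.2)) ∧
      (∀ X Y : A × B,
        Functor.LaxMonoidal.μ (biprodComparison F₁ F₂) (self := h) X Y ≫
            (biprodComparison F₁ F₂).map ((β_ X.1 Y.1).hom, (β_ X.2 Y.2).hom) =
          (β_ ((biprodComparison F₁ F₂).obj X) ((biprodComparison F₁ F₂).obj Y)).hom ≫
            Functor.LaxMonoidal.μ (biprodComparison F₁ F₂) (self := h) Y X)) ∧
    (∃ l₁ : Prod.sectL A (𝟙_ B) ⋙ biprodComparison F₁ F₂ ≅ F₁,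
      ∀ X : A, l₁.hom.app X = (𝟙 (F₁.obj X) ⊗ₘ η F₂) ≫ (ρ_ (F₁.obj X)).hom) ∧
    (∃ l₂ : Prod.sectR (𝟙_ A) B ⋙ biprodComparison F₁ F₂ ≅ F₂,
      ∀ X : B, l₂.hom.app X = (η F₁ ⊗ₘ 𝟙 (F₂.obj X)) ≫ (λ_ (F₂.obj X)).hom) :=
  biproduct_comparison_monoidal_general F₁ F₂
end
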